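/- arXiv:1509.06604 — 3 statements merged into one kernel-verified Lean document; each statement's English description precedes it below -/
import Mathlib

section
/- For d ≥ 2 and positive reals λ_1 ≥ ... ≥ λ_d, if λ_1 / (λ_1⋯λ_d)^{1/d} ≤ min(1 + 1/d, (1 - 1/d)^{-1/(d-1)}), then for every i one has |λ_i / (λ_1⋯λ_d)^{1/d} − 1| ≤ 1/d. -/
/-!
Normalise by the geometric mean `G`, so that the numbers `μ i = λ i / G` are positive with
product `1`. The upper bound `μ i ≤ μ 0 ≤ 1 + 1/d` is immediate. For the lower bound, each `μ i`
is the inverse of the product of the other `d - 1` factors, each at most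
`μ 0 ≤ (1 - 1/d)^(-1/(d-1))`, so `μ i ≥ ((1 - 1/d)^(-1/(d-1)))^(-(d-1)) = 1 - 1/d`.
-/

theorem Real.prod_div_rpow_one_div_card_eq_one {ι : Type*} [Fintype ι] [Nonempty ι]
    {f : ι → ℝ} (hf : ∀ i, 0 < f i) :
    ∏ i, f i / (∏ j, f j) ^ ((1 : ℝ) / Fintype.card ι) = 1 := by
  have hP : 0 < ∏ j, f j := Finset.prod_pos fun j _ => hf j
  rw [Finset.prod_div_distrib, Finset.prod_const, Finset.card_univ, one_div,
    Real.rpow_inv_natCast_pow hP.le Fintype.card_ne_zero, div_self hP.ne']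

theorem inv_pow_card_pred_le_of_prod_eq_one {ι : Type*} [Fintype ι] {μ : ι → ℝ} {M : ℝ}
    (hpos : ∀ i, 0 < μ i) (hprod : ∏ i, μ i = 1) (hle : ∀ i, μ i ≤ M) (i : ι) :
    (M ^ (Fintype.card ι - 1))⁻¹ ≤ μ i := by
  classical
  have hrest_pos : 0 < ∏ j ∈ Finset.univ.erase i, μ j := Finset.prod_pos fun j _ => hpos j
  have hrest_le : ∏ j ∈ Finset.univ.erase i, μ j ≤ M ^ (Fintype.card ι - 1) := by
    calc ∏ j ∈ Finset.univ.erase i, μ j ≤ ∏ _j ∈ Finset.univ.erase i, M :=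
          Finset.prod_le_prod (fun j _ => (hpos j).le) fun j _ => hle j
      _ = M ^ (Fintype.card ι - 1) := by
          rw [Finset.prod_const, Finset.card_erase_of_mem (Finset.mem_univ i), Finset.card_univ]
  have hμi : μ i = (∏ j ∈ Finset.univ.erase i, μ j)⁻¹ :=
    eq_inv_of_mul_eq_one_left ((Finset.mul_prod_erase _ μ (Finset.mem_univ i)).trans hprod)
  rw [hμi]
  exact inv_anti₀ hrest_pos hrest_le

theorem Real.rpow_neg_one_div_natCast_pow {x : ℝ} (hx : 0 ≤ x) {m : ℕ} (hm : m ≠ 0) :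
    (x ^ (-(1 / (m : ℝ)))) ^ m = x⁻¹ := by
  rw [Real.rpow_neg hx, inv_pow, one_div, Real.rpow_inv_natCast_pow hx hm]

theorem stmt_2 (d : ℕ) (hd : 2 ≤ d) (lam : Fin d → ℝ)
    (hpos : ∀ i, 0 < lam i)
    (hmono : ∀ i j : Fin d, i ≤ j → lam j ≤ lam i)
    (h : lam ⟨0, by omega⟩ / (∏ i, lam i) ^ ((1 : ℝ) / d) ≤
      min (1 + 1 / (d : ℝ)) ((1 - 1 / (d : ℝ)) ^ (-(1 / ((d : ℝ) - 1))))) :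
    ∀ i : Fin d, |lam i / (∏ j, lam j) ^ ((1 : ℝ) / d) - 1| ≤ 1 / (d : ℝ) := by
  intro i
  have : NeZero d := ⟨by omega⟩
  set G := (∏ j, lam j) ^ ((1 : ℝ) / d)
  have hG : 0 < G := Real.rpow_pos_of_pos (Finset.prod_pos fun j _ => hpos j) _
  have hprod : ∏ j, lam j / G = 1 := by
    have := Real.prod_div_rpow_one_div_card_eq_one hpos
    rwa [Fintype.card_fin] at this
  have hmax : ∀ j, lam j / G ≤ lam ⟨0, by omega⟩ / G := fun j =>
    div_le_div_of_nonneg_right (hmono _ j (Fin.zero_le j)) hG.le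
  have hupper : lam i / G ≤ 1 + 1 / d := (hmax i).trans (h.trans (min_le_left _ _))
  have hlower : 1 - 1 / (d : ℝ) ≤ lam i / G := by
    have hbase : 0 ≤ 1 - 1 / (d : ℝ) := by
      rw [sub_nonneg, div_le_one (by positivity)]; exact_mod_cast (by omega : 1 ≤ d)
    have hd1 : (d : ℝ) - 1 = ((d - 1 : ℕ) : ℝ) := by rw [Nat.cast_pred (by omega)]
    have := inv_pow_card_pred_le_of_prod_eq_one (fun j => div_pos (hpos j) hG) hprod
      (fun j => (hmax j).trans (h.trans (min_le_right _ _))) i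
    rwa [Fintype.card_fin, hd1, Real.rpow_neg_one_div_natCast_pow hbase (by omega),
      inv_inv] at this
  rw [abs_le]
  constructor <;> linarith
end

section
/- Let A be a symmetric positive definite d×d real matrix (d ≥ 2) and let q_i, q_j be unit vectors with q_i · q_j = −1/d. If ‖A / (det A)^{1/d} − I‖ ≤ 1/d in the operator 2-norm, then q_iᵀ A q_j ≤ 0. -/
noncomputable def specNorm {d : ℕ} (A : Matrix (Fin d) (Fin d) ℝ) : ℝ :=
  ‖LinearMap.toContinuousLinearMap (Matrix.toEuclideanLin A)‖

/-!
With `c = (det A)^(1/d)` and `B = c⁻¹ A - I`, the bilinear form splits as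
`qᵢᵀ A qⱼ = c (qᵢ ⬝ qⱼ + qᵢᵀ B qⱼ)`, and Cauchy–Schwarz bounds `qᵢᵀ B qⱼ` by `‖B‖ ≤ 1/d`,
which exactly cancels `qᵢ ⬝ qⱼ = -1/d`.
-/

open Matrix

theorem norm_toLp_eq_sqrt_dotProduct {n : Type*} [Fintype n] (x : n → ℝ) :
    ‖WithLp.toLp 2 x‖ = √(x ⬝ᵥ x) := by
  rw [norm_eq_sqrt_real_inner, EuclideanSpace.inner_toLp_toLp]
  simp [dotProduct]

theorem dotProduct_mulVec_le_specNorm {d : ℕ} (B : Matrix (Fin d) (Fin d) ℝ) (x y : Fin d → ℝ) :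
    x ⬝ᵥ B *ᵥ y ≤ specNorm B * √(x ⬝ᵥ x) * √(y ⬝ᵥ y) := by
  set T := LinearMap.toContinuousLinearMap (Matrix.toEuclideanLin B)
  have hT : x ⬝ᵥ B *ᵥ y = inner ℝ (WithLp.toLp 2 x) (T (WithLp.toLp 2 y)) := by
    rw [LinearMap.coe_toContinuousLinearMap', Matrix.toLpLin_toLp,
      EuclideanSpace.inner_toLp_toLp, dotProduct_comm]
    rfl
  rw [← norm_toLp_eq_sqrt_dotProduct, ← norm_toLp_eq_sqrt_dotProduct, hT]
  calc _ ≤ ‖WithLp.toLp 2 x‖ * ‖T (WithLp.toLp 2 y)‖ := real_inner_le_norm _ _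
    _ ≤ ‖WithLp.toLp 2 x‖ * (‖T‖ * ‖WithLp.toLp 2 y‖) := by gcongr; exact T.le_opNorm _
    _ = _ := by unfold specNorm; ring

theorem dotProduct_mulVec_le_of_specNorm_smul_sub_one_le {d : ℕ}
    {A : Matrix (Fin d) (Fin d) ℝ} {c ε : ℝ} (hc : 0 < c) (hA : specNorm (c⁻¹ • A - 1) ≤ ε)
    {x y : Fin d → ℝ} (hx : x ⬝ᵥ x = 1) (hy : y ⬝ᵥ y = 1) :
    x ⬝ᵥ A *ᵥ y ≤ c * (x ⬝ᵥ y + ε) := by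
  have hsplit : A = c • ((c⁻¹ • A - 1) + 1) := by
    rw [sub_add_cancel, smul_smul, mul_inv_cancel₀ hc.ne', one_smul]
  have hB := dotProduct_mulVec_le_specNorm (c⁻¹ • A - 1) x y
  rw [hx, hy, Real.sqrt_one, mul_one, mul_one] at hB
  rw [hsplit, smul_mulVec, dotProduct_smul, add_mulVec, one_mulVec, dotProduct_add, smul_eq_mul]
  exact mul_le_mul_of_nonneg_left (by linarith) hc.le

open Matrix in
theorem stmt_3_general (d : ℕ) (A : Matrix (Fin d) (Fin d) ℝ)
    (hA : A.PosDef) (qi qj : Fin d → ℝ)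
    (hqi : qi ⬝ᵥ qi = 1) (hqj : qj ⬝ᵥ qj = 1) (hij : qi ⬝ᵥ qj = -(1 / (d : ℝ)))
    (h : specNorm ((A.det ^ ((1 : ℝ) / d))⁻¹ • A - 1) ≤ 1 / (d : ℝ)) :
    qi ⬝ᵥ A.mulVec qj ≤ 0 := by
  have hc : 0 < A.det ^ ((1 : ℝ) / d) := Real.rpow_pos_of_pos hA.det_pos _
  have := dotProduct_mulVec_le_of_specNorm_smul_sub_one_le hc h hqi hqj
  rwa [hij, neg_add_cancel, mul_zero] at this

open Matrix in
theorem stmt_3 (d : ℕ) (hd : 2 ≤ d) (A : Matrix (Fin d) (Fin d) ℝ)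
    (hA : A.PosDef) (qi qj : Fin d → ℝ)
    (hqi : qi ⬝ᵥ qi = 1) (hqj : qj ⬝ᵥ qj = 1) (hij : qi ⬝ᵥ qj = -(1 / (d : ℝ)))
    (h : specNorm ((A.det ^ ((1 : ℝ) / d))⁻¹ • A - 1) ≤ 1 / (d : ℝ)) :
    qi ⬝ᵥ A.mulVec qj ≤ 0 :=
  stmt_3_general d A hA qi qj hqi hqj hij h
end

section
/- Let A be a symmetric positive definite d×d matrix and q_i, q_j unit vectors with q_i · q_j = −1/d. If every eigenvalue λ of A satisfies (1 − 1/d)(det A)^{1/d} ≤ λ ≤ (1 + 1/d)(det A)^{1/d}, then q_iᵀ A q_j ≤ 0. -/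
/-!
Polarization gives `4 xᵀAy = (x + y)ᵀA(x + y) - (x - y)ᵀA(x - y)`. If the spectrum of `A` lies in
`[a, b]`, the first term is at most `b ‖x + y‖² = 2b (1 + x ⬝ y)` and the second at least
`a ‖x - y‖² = 2a (1 - x ⬝ y)` for unit vectors, so `xᵀAy ≤ ((b - a) + (a + b) x ⬝ y) / 2`.
With `a, b = (1 ∓ 1/d) (det A)^(1/d)` and `x ⬝ y = -1/d` this bound is exactly `0`.
-/

namespace Matrix

section CommRing

variable {n α : Type*} [Fintype n] [CommRing α] {A : Matrix n n α}

theorem IsSymm.dotProduct_mulVec_comm (hA : A.IsSymm) (x y : n → α) :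
    y ⬝ᵥ A *ᵥ x = x ⬝ᵥ A *ᵥ y := by
  rw [dotProduct_mulVec, dotProduct_comm, ← mulVec_transpose, hA.eq]

theorem IsSymm.four_mul_dotProduct_mulVec (hA : A.IsSymm) (x y : n → α) :
    4 * (x ⬝ᵥ A *ᵥ y) = (x + y) ⬝ᵥ A *ᵥ (x + y) - (x - y) ⬝ᵥ A *ᵥ (x - y) := by
  simp only [mulVec_add, mulVec_sub, add_dotProduct, sub_dotProduct, dotProduct_add,
    dotProduct_sub, hA.dotProduct_mulVec_comm x y]
  ring

end CommRing

variable {n : Type*} [Fintype n] [DecidableEq n] {A : Matrix n n ℝ}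

theorem IsHermitian.posSemidef_sub_algebraMap (hA : A.IsHermitian) {a : ℝ}
    (h : spectrum ℝ A ⊆ Set.Ici a) : (A - algebraMap ℝ _ a).PosSemidef := by
  refine posSemidef_iff_isHermitian_and_spectrum_nonneg.mpr
    ⟨hA.sub (IsSelfAdjoint.algebraMap _ (.all a)), ?_⟩
  rw [← spectrum.sub_singleton_eq]
  rintro _ ⟨μ, hμ, _, rfl, rfl⟩
  exact sub_nonneg.mpr (Set.mem_Ici.mp (h hμ))

theorem IsHermitian.posSemidef_algebraMap_sub (hA : A.IsHermitian) {b : ℝ}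
    (h : spectrum ℝ A ⊆ Set.Iic b) : (algebraMap ℝ _ b - A).PosSemidef := by
  refine posSemidef_iff_isHermitian_and_spectrum_nonneg.mpr
    ⟨(IsSelfAdjoint.algebraMap _ (.all b)).sub hA, ?_⟩
  rw [← spectrum.singleton_sub_eq]
  rintro _ ⟨_, rfl, μ, hμ, rfl⟩
  exact sub_nonneg.mpr (Set.mem_Iic.mp (h hμ))

theorem IsHermitian.mul_dotProduct_self_le_dotProduct_mulVec (hA : A.IsHermitian) {a : ℝ}
    (h : spectrum ℝ A ⊆ Set.Ici a) (v : n → ℝ) : a * (v ⬝ᵥ v) ≤ v ⬝ᵥ A *ᵥ v := by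
  have := (hA.posSemidef_sub_algebraMap h).dotProduct_mulVec_nonneg v
  simpa only [Algebra.algebraMap_eq_smul_one, sub_mulVec, smul_mulVec, one_mulVec,
    dotProduct_sub, dotProduct_smul, smul_eq_mul, star_trivial, sub_nonneg] using this

theorem IsHermitian.dotProduct_mulVec_le_mul_dotProduct_self (hA : A.IsHermitian) {b : ℝ}
    (h : spectrum ℝ A ⊆ Set.Iic b) (v : n → ℝ) : v ⬝ᵥ A *ᵥ v ≤ b * (v ⬝ᵥ v) := by
  have := (hA.posSemidef_algebraMap_sub h).dotProduct_mulVec_nonneg v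
  simpa only [Algebra.algebraMap_eq_smul_one, sub_mulVec, smul_mulVec, one_mulVec,
    dotProduct_sub, dotProduct_smul, smul_eq_mul, star_trivial, sub_nonneg] using this

theorem IsHermitian.dotProduct_mulVec_le_of_spectrum_subset_Icc (hA : A.IsHermitian) {a b : ℝ}
    (h : spectrum ℝ A ⊆ Set.Icc a b) {x y : n → ℝ} (hx : x ⬝ᵥ x = 1) (hy : y ⬝ᵥ y = 1) :
    x ⬝ᵥ A *ᵥ y ≤ (b - a + (a + b) * (x ⬝ᵥ y)) / 2 := by
  have hsum :=
    hA.dotProduct_mulVec_le_mul_dotProduct_self (h.trans Set.Icc_subset_Iic_self) (x + y)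
  have hdiff :=
    hA.mul_dotProduct_self_le_dotProduct_mulVec (h.trans Set.Icc_subset_Ici_self) (x - y)
  have hpolar := (isHermitian_iff_isSymm.mp hA).four_mul_dotProduct_mulVec x y
  have hsum_sq : (x + y) ⬝ᵥ (x + y) = 2 + 2 * (x ⬝ᵥ y) := by
    simp only [add_dotProduct, dotProduct_add, hx, hy, dotProduct_comm y x]; ring
  have hdiff_sq : (x - y) ⬝ᵥ (x - y) = 2 - 2 * (x ⬝ᵥ y) := by
    simp only [sub_dotProduct, dotProduct_sub, hx, hy, dotProduct_comm y x]; ring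
  rw [hsum_sq] at hsum
  rw [hdiff_sq] at hdiff
  linarith

end Matrix

open Matrix in
theorem stmt_19_general (d : ℕ) (A : Matrix (Fin d) (Fin d) ℝ)
    (hA : A.PosDef) (qi qj : Fin d → ℝ)
    (hqi : qi ⬝ᵥ qi = 1) (hqj : qj ⬝ᵥ qj = 1) (hij : qi ⬝ᵥ qj = -(1 / (d : ℝ)))
    (heig : ∀ μ ∈ spectrum ℝ A,
      (1 - 1 / (d : ℝ)) * A.det ^ ((1 : ℝ) / d) ≤ μ ∧
        μ ≤ (1 + 1 / (d : ℝ)) * A.det ^ ((1 : ℝ) / d)) :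
    qi ⬝ᵥ A.mulVec qj ≤ 0 := by
  have h := hA.isHermitian.dotProduct_mulVec_le_of_spectrum_subset_Icc heig hqi hqj
  rw [hij] at h
  convert h using 1
  ring

open Matrix in
theorem stmt_19 (d : ℕ) (hd : 2 ≤ d) (A : Matrix (Fin d) (Fin d) ℝ)
    (hA : A.PosDef) (qi qj : Fin d → ℝ)
    (hqi : qi ⬝ᵥ qi = 1) (hqj : qj ⬝ᵥ qj = 1) (hij : qi ⬝ᵥ qj = -(1 / (d : ℝ)))
    (heig : ∀ μ ∈ spectrum ℝ A,
      (1 - 1 / (d : ℝ)) * A.det ^ ((1 : ℝ) / d) ≤ μ ∧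
        μ ≤ (1 + 1 / (d : ℝ)) * A.det ^ ((1 : ℝ) / d)) :
    qi ⬝ᵥ A.mulVec qj ≤ 0 :=
  stmt_19_general d A hA qi qj hqi hqj hij heig
end
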